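/- arXiv:0910.4337 — 2 statements merged into one kernel-verified Lean document; each statement's English description precedes it below -/
import Mathlib

section
/- The characteristic function of the density k(x) = (1/√(2π)) e^(x/2) e^(−e^x/2) is φ_k(t) = π^(−1/2) · 2^(it) · Γ(1/2 + it). -/
/-!
The substitution `y = eˣ` turns the integral into the Gamma integral
`(2π)^(-1/2) ∫₀^∞ y^(s-1) e^(-y/2) dy = (2π)^(-1/2) 2^s Γ(s)` with `s = 1/2 + it`,
and `2^(1/2) / √(2π) = 1 / √π`.
-/

open MeasureTheory Real Complex

theorem integral_comp_exp {E : Type*} [NormedAddCommGroup E] [NormedSpace ℝ E] (g : ℝ → E) :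
    ∫ x : ℝ, Real.exp x • g (Real.exp x) = ∫ y in Set.Ioi 0, g y := by
  rw [← Real.range_exp, ← Set.image_univ, integral_image_eq_integral_abs_deriv_smul
    MeasurableSet.univ (fun x _ ↦ (Real.hasDerivAt_exp x).hasDerivWithinAt)
    Real.exp_injective.injOn]
  simp [abs_of_pos (Real.exp_pos _)]

theorem ofReal_exp_cpow (x : ℝ) (w : ℂ) : (Real.exp x : ℂ) ^ w = Complex.exp (x * w) := by
  rw [cpow_def_of_ne_zero (by exact_mod_cast (Real.exp_pos x).ne'),
    ← ofReal_log (Real.exp_pos x).le, Real.log_exp]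

theorem integral_exp_mul_sub_mul_exp {s : ℂ} (hs : 0 < s.re) {r : ℝ} (hr : 0 < r) :
    ∫ x : ℝ, Complex.exp (s * x - r * Real.exp x) = (1 / r) ^ s * Gamma s := by
  rw [← integral_cpow_mul_exp_neg_mul_Ioi hs hr, ← integral_comp_exp]
  congr 1 with x
  rw [ofReal_exp_cpow, real_smul, ofReal_exp, ← Complex.exp_add, ← Complex.exp_add]
  ring_nf

theorem ofReal_cpow_half_add {x : ℝ} (hx : 0 < x) (w : ℂ) :
    (x : ℂ) ^ (1 / 2 + w) = Real.sqrt x * (x : ℂ) ^ w := by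
  rw [cpow_add _ _ (ofReal_ne_zero.2 hx.ne'), Real.sqrt_eq_rpow, ofReal_cpow hx.le]
  norm_num

/-- The characteristic function of the density `k(x) = (1/√(2π)) e^(x/2) e^(-e^x/2)`
is `φ_k(t) = π^(-1/2) 2^(it) Γ(1/2 + it)`. -/
theorem charFun_log_chisq (t : ℝ) :
    (∫ x : ℝ, Complex.exp (Complex.I * t * x) *
        ((1 / Real.sqrt (2 * Real.pi)) * Real.exp (x / 2) *
          Real.exp (- Real.exp x / 2) : ℝ)) =
      (1 / Real.sqrt Real.pi : ℝ) * (2 : ℂ) ^ (Complex.I * t) *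
        Complex.Gamma (1 / 2 + Complex.I * t) := by
  set s : ℂ := 1 / 2 + Complex.I * t
  have density_eq : ∀ x : ℝ, Complex.exp (Complex.I * t * x) *
      ((1 / Real.sqrt (2 * Real.pi)) * Real.exp (x / 2) * Real.exp (- Real.exp x / 2) : ℝ) =
      (1 / Real.sqrt (2 * Real.pi) : ℝ) * Complex.exp (s * x - (1 / 2 : ℝ) * Real.exp x) := by
    intro x
    push_cast [s]
    rw [mul_left_comm, mul_assoc, ← Complex.exp_add, ← Complex.exp_add]
    ring_nf
  have two_cpow_s : (2 : ℂ) ^ s = Real.sqrt 2 * 2 ^ (Complex.I * t) := by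
    exact_mod_cast ofReal_cpow_half_add two_pos (Complex.I * t)
  have hs : 0 < s.re := by simp [s]
  calc _ = (1 / Real.sqrt (2 * Real.pi) : ℝ) *
        ∫ x : ℝ, Complex.exp (s * x - (1 / 2 : ℝ) * Real.exp x) := by
        simp_rw [density_eq]
        exact integral_const_mul _ _
    _ = (1 / Real.sqrt (2 * Real.pi) : ℝ) * (2 ^ s * Gamma s) := by
        rw [integral_exp_mul_sub_mul_exp hs one_half_pos]
        norm_num
    _ = _ := by
        have sqrt_two_ne_zero : (Real.sqrt 2 : ℂ) ≠ 0 := by exact_mod_cast (Real.sqrt_pos.2 two_pos).ne'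
        rw [two_cpow_s, Real.sqrt_mul zero_le_two]
        push_cast
        field_simp
end

section
/- If φ_w is supported in [−1,1] and |φ_k(t)| ≥ c·e^(−π|t|/2) for |t| large (and φ_k is continuous nonvanishing), then γ₀(h) := (1/2π) ∫_{−1}^{1} |φ_w(s)/φ_k(s/h)| ds satisfies γ₀(h) = O(h^(1+ρ) e^(π/(2h))) as h ↓ 0, provided φ_w(1−t) = A t^ρ + o(t^ρ) as t ↓ 0 and φ_w is symmetric with |φ_w| ≤ 1. -/
/-! Since `φ_k` is continuous and nonvanishing, the tail bound extends to
`c' e^{-π|t|/2} ≤ ‖φ_k t‖` for all `t`, so the integrand is at most `|φ_w s| e^{λ|s|} / c'` with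
`λ = π/(2h)`. By symmetry and the substitution `s = 1 - t` the integral becomes
`2 e^λ / c' · ∫₀¹ |φ_w(1-t)| e^{-λt} dt`. The edge behaviour gives `|φ_w(1-t)| ≤ B t^ρ` on `[0,1]`,
and `∫₀^∞ t^ρ e^{-λt} dt = Γ(ρ+1) λ^{-(ρ+1)}` supplies the factor `h^{1+ρ}`. -/

open MeasureTheory Real Asymptotics intervalIntegral Set Topology

lemma exists_pos_mul_le_norm_of_tail {E : Type*} [NormedAddCommGroup E] {f : ℝ → E} {w : ℝ → ℝ}
    {c T : ℝ} (hf : Continuous f) (hne : ∀ t, f t ≠ 0) (hw₀ : ∀ t, 0 ≤ w t)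
    (hw₁ : ∀ t, w t ≤ 1) (hc : 0 < c) (htail : ∀ t, T ≤ |t| → c * w t ≤ ‖f t‖) :
    ∃ c' > 0, ∀ t, c' * w t ≤ ‖f t‖ := by
  obtain ⟨m, hm, hmf⟩ := (isCompact_Icc (a := -T) (b := T)).exists_forall_le'
    hf.norm.continuousOn fun t _ => norm_pos_iff.2 (hne t)
  refine ⟨min c m, lt_min hc hm, fun t => ?_⟩
  rcases le_or_gt T |t| with ht | ht
  · exact (mul_le_mul_of_nonneg_right (min_le_left c m) (hw₀ t)).trans (htail t ht)
  · calc min c m * w t ≤ m * w t := mul_le_mul_of_nonneg_right (min_le_right c m) (hw₀ t)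
      _ ≤ m := mul_le_of_le_one_right hm.le (hw₁ t)
      _ ≤ ‖f t‖ := hmf t (abs_le.1 ht.le)

lemma exists_abs_le_mul_rpow_of_isBigO {f : ℝ → ℝ} {ρ M : ℝ} (hρ : 0 ≤ ρ)
    (hf : f =O[𝓝[>] 0] fun t => t ^ ρ) (hf₀ : f 0 = 0) (hM : ∀ t ∈ Icc (0 : ℝ) 1, |f t| ≤ M) :
    ∃ B > 0, ∀ t ∈ Icc (0 : ℝ) 1, |f t| ≤ B * t ^ ρ := by
  obtain ⟨K, hK⟩ := hf.bound
  obtain ⟨δ, hδ, hδK⟩ := mem_nhdsGT_iff_exists_Ioo_subset.1 hK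
  have hM₀ : 0 ≤ M := (abs_nonneg _).trans (hM 0 ⟨le_rfl, zero_le_one⟩)
  have hδρ : 0 < δ ^ ρ := rpow_pos_of_pos hδ ρ
  refine ⟨max 1 (max K (M / δ ^ ρ)), lt_max_of_lt_left one_pos, fun t ht => ?_⟩
  have hKB := le_max_left K (M / δ ^ ρ)
  have hMB := le_max_right K (M / δ ^ ρ)
  have hB := le_max_right 1 (max K (M / δ ^ ρ))
  have htρ : 0 ≤ t ^ ρ := rpow_nonneg ht.1 ρ
  rcases ht.1.eq_or_lt with rfl | ht₀
  · rw [hf₀, abs_zero]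
    exact mul_nonneg (zero_le_one.trans (le_max_left _ _)) htρ
  rcases lt_or_ge t δ with htδ | htδ
  · have hKt : |f t| ≤ K * t ^ ρ := by
      simpa [abs_of_nonneg htρ] using hδK ⟨ht₀, htδ⟩
    nlinarith
  · have hMt : M ≤ M / δ ^ ρ * t ^ ρ := by
      rw [div_mul_eq_mul_div, le_div_iff₀ (by positivity)]
      exact mul_le_mul_of_nonneg_left (rpow_le_rpow hδ.le htδ hρ) hM₀
    nlinarith [hM t ht]

lemma integral_rpow_mul_exp_neg_mul_le {ρ r a : ℝ} (hρ : -1 < ρ) (hr : 0 < r) (ha : 0 ≤ a) :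
    ∫ t in 0..a, t ^ ρ * exp (-(r * t)) ≤ (1 / r) ^ (ρ + 1) * Gamma (ρ + 1) := by
  have hint : IntegrableOn (fun t : ℝ => t ^ ρ * exp (-(r * t))) (Ioi 0) := by
    simpa [rpow_one, neg_mul] using integrableOn_rpow_mul_exp_neg_mul_rpow hρ one_pos hr
  have hGamma := integral_rpow_mul_exp_neg_mul_Ioi (a := ρ + 1) (by linarith) hr
  rw [add_sub_cancel_right] at hGamma
  rw [integral_of_le ha, ← hGamma]
  exact setIntegral_mono_set hint
    ((ae_restrict_iff' measurableSet_Ioi).2 (ae_of_all _ fun t ht => by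
      have := rpow_nonneg (le_of_lt (mem_Ioi.1 ht)) ρ; positivity))
    (Ioc_subset_Ioi_self.eventuallyLE)

lemma integral_eq_two_mul_of_even {f : ℝ → ℝ} (hf : Continuous f) (heven : ∀ x, f (-x) = f x)
    (a : ℝ) : ∫ x in -a..a, f x = 2 * ∫ x in 0..a, f x := by
  rw [← integral_add_adjacent_intervals (hf.intervalIntegrable _ 0) (hf.intervalIntegrable 0 _)]
  have hneg : ∫ x in -a..0, f x = ∫ x in 0..a, f x := by
    simpa [heven] using (integral_comp_neg (a := 0) (b := a) f).symm
  rw [hneg]; ring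

lemma integral_abs_mul_exp_le_of_abs_le_rpow {f : ℝ → ℝ} {B ρ r : ℝ}
    (hρ : -1 < ρ) (hr : 0 < r) (hf : Continuous f) (heven : ∀ s, f (-s) = f s)
    (hB : ∀ t ∈ Icc (0 : ℝ) 1, |f (1 - t)| ≤ B * t ^ ρ) :
    ∫ s in -1..1, |f s| * exp (r * |s|) ≤ 2 * B * (1 / r) ^ (ρ + 1) * Gamma (ρ + 1) * exp r := by
  have hg : Continuous fun s => |f s| * exp (r * |s|) := by fun_prop
  have hreflect : ∫ s in 0..1, |f s| * exp (r * |s|)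
      = ∫ t in 0..1, |f (1 - t)| * exp (r * |1 - t|) := by
    rw [integral_comp_sub_left (fun s => |f s| * exp (r * |s|)) 1, sub_self, sub_zero]
  rw [integral_eq_two_mul_of_even hg (fun s => by simp only [heven, abs_neg]), hreflect]
  have hpt : ∀ t ∈ Icc (0 : ℝ) 1,
      |f (1 - t)| * exp (r * |1 - t|) ≤ B * exp r * (t ^ ρ * exp (-(r * t))) := by
    intro t ht
    have hexp : exp (r * (1 - t)) = exp r * exp (-(r * t)) := by rw [← exp_add]; ring_nf
    rw [abs_of_nonneg (sub_nonneg.2 ht.2), hexp]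
    calc |f (1 - t)| * (exp r * exp (-(r * t)))
        ≤ B * t ^ ρ * (exp r * exp (-(r * t))) := by gcongr; exact hB t ht
      _ = B * exp r * (t ^ ρ * exp (-(r * t))) := by ring
  have hB₀ : 0 ≤ B := by simpa using (abs_nonneg _).trans (hB 1 ⟨zero_le_one, le_rfl⟩)
  have hint : IntervalIntegrable (fun t : ℝ => t ^ ρ * exp (-(r * t))) volume 0 1 :=
    (intervalIntegrable_rpow' hρ).mul_continuousOn (by fun_prop)
  calc 2 * ∫ t in 0..1, |f (1 - t)| * exp (r * |1 - t|)
      ≤ 2 * ∫ t in 0..1, B * exp r * (t ^ ρ * exp (-(r * t))) := by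
        gcongr
        exact integral_mono_on zero_le_one
          ((hg.comp (continuous_sub_left 1)).intervalIntegrable _ _) (hint.const_mul _) hpt
    _ ≤ 2 * (B * exp r * ((1 / r) ^ (ρ + 1) * Gamma (ρ + 1))) := by
        rw [intervalIntegral.integral_const_mul]
        gcongr
        exact integral_rpow_mul_exp_neg_mul_le hρ hr zero_le_one
    _ = 2 * B * (1 / r) ^ (ρ + 1) * Gamma (ρ + 1) * exp r := by ring

lemma norm_ofReal_div_le {x u c : ℝ} {z : ℂ} (hc : 0 < c) (hz : c * exp (-u) ≤ ‖z‖) :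
    ‖(x : ℂ) / z‖ ≤ |x| * exp u / c := by
  rw [norm_div, Complex.norm_real, Real.norm_eq_abs]
  calc |x| / ‖z‖ ≤ |x| / (c * exp (-u)) :=
        div_le_div_of_nonneg_left (abs_nonneg x) (by positivity) hz
    _ = |x| * exp u / c := by rw [exp_neg]; field_simp

lemma integral_norm_ofReal_div_le {f u : ℝ → ℝ} {g : ℝ → ℂ} {a b c : ℝ} (hab : a ≤ b)
    (hf : Continuous f) (hu : Continuous u) (hg : Continuous g) (hne : ∀ s, g s ≠ 0)
    (hc : 0 < c) (hgu : ∀ s, c * exp (-u s) ≤ ‖g s‖) :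
    ∫ s in a..b, ‖(f s : ℂ) / g s‖ ≤ (∫ s in a..b, |f s| * exp (u s)) / c := by
  have hquot : Continuous fun s => ‖(f s : ℂ) / g s‖ :=
    ((Complex.continuous_ofReal.comp hf).div hg hne).norm
  rw [← intervalIntegral.integral_div]
  exact integral_mono_on hab (hquot.intervalIntegrable _ _)
    ((by fun_prop : Continuous fun s => |f s| * exp (u s) / c).intervalIntegrable _ _)
    fun s _ => norm_ofReal_div_le hc (hgu s)

/-- Bound on `γ₀(h) = (1/2π) ∫_{-1}^1 |φ_w(s)/φ_k(s/h)| ds`: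
under the stated conditions on `φ_w` and `φ_k`, `γ₀(h) = O(h^{1+ρ} e^{π/(2h)})` as `h ↓ 0`. -/
theorem gamma0_bound (φw : ℝ → ℝ) (φk : ℝ → ℂ) (A ρ c T : ℝ)
    (hρ : 0 < ρ) (hc : 0 < c)
    (hφw_cont : Continuous φw)
    (hφw_symm : ∀ s, φw (-s) = φw s)
    (hφw_bdd : ∀ s, |φw s| ≤ 1)
    (hφw_supp : ∀ s, s ∉ Set.Icc (-1 : ℝ) 1 → φw s = 0)
    (hφw_edge : (fun t => φw (1 - t) - A * t ^ ρ) =o[nhdsWithin 0 (Set.Ioi 0)]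
      fun t => t ^ ρ)
    (hφk_cont : Continuous φk)
    (hφk_ne : ∀ t, φk t ≠ 0)
    (hφk_lower : ∀ t : ℝ, T ≤ |t| → c * Real.exp (-Real.pi * |t| / 2) ≤ ‖φk t‖) :
    ∃ C h₀ : ℝ, 0 < C ∧ 0 < h₀ ∧ ∀ h : ℝ, 0 < h → h < h₀ →
      (1 / (2 * Real.pi)) * ∫ s in (-1 : ℝ)..1, ‖(φw s : ℂ) / φk (s / h)‖ ≤
        C * h ^ (1 + ρ) * Real.exp (Real.pi / (2 * h)) := by
  obtain ⟨c', hc', hφk_ge⟩ := exists_pos_mul_le_norm_of_tail (w := fun t => exp (-π * |t| / 2))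
    hφk_cont hφk_ne (fun _ => (exp_pos _).le)
    (fun t => exp_le_one_iff.2 (by nlinarith [pi_pos, abs_nonneg t])) hc hφk_lower
  have hφw_one : φw 1 = 0 :=
    EqOn.of_subset_closure (fun s hs => hφw_supp s fun h => not_le.2 hs h.2)
      hφw_cont.continuousOn continuousOn_const Ioi_subset_Ici_self (closure_Ioi (1 : ℝ)).ge
      self_mem_Ici
  have hφw_isBigO : (fun t => φw (1 - t)) =O[𝓝[>] 0] fun t => t ^ ρ := by
    simpa using hφw_edge.isBigO.add (isBigO_const_mul_self A _ _)
  obtain ⟨B, hB, hφw_le⟩ := exists_abs_le_mul_rpow_of_isBigO hρ.le hφw_isBigO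
    (by simpa using hφw_one) fun t _ => hφw_bdd _
  refine ⟨B * (2 / π) ^ (1 + ρ) * Gamma (1 + ρ) / (π * c'), 1, by positivity, one_pos,
    fun h hh _ => ?_⟩
  have hφk_ge_scaled : ∀ s, c' * exp (-(π / (2 * h) * |s|)) ≤ ‖φk (s / h)‖ := fun s => by
    convert hφk_ge (s / h) using 3
    rw [abs_div, abs_of_pos hh]; ring
  have hscale : (1 / (π / (2 * h))) ^ (ρ + 1) = (2 / π) ^ (1 + ρ) * h ^ (1 + ρ) := by
    rw [add_comm, ← mul_rpow (by positivity) hh.le]; congr 1; field_simp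
  calc (1 / (2 * π)) * ∫ s in (-1 : ℝ)..1, ‖(φw s : ℂ) / φk (s / h)‖
      ≤ (1 / (2 * π)) * ((∫ s in (-1 : ℝ)..1, |φw s| * exp (π / (2 * h) * |s|)) / c') := by
        gcongr
        exact integral_norm_ofReal_div_le (by norm_num) hφw_cont (by fun_prop)
          (hφk_cont.comp (continuous_id.div_const h)) (fun _ => hφk_ne _) hc' hφk_ge_scaled
    _ ≤ (1 / (2 * π)) * (2 * B * (1 / (π / (2 * h))) ^ (ρ + 1) * Gamma (ρ + 1)
          * exp (π / (2 * h)) / c') := by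
        gcongr
        exact integral_abs_mul_exp_le_of_abs_le_rpow (by linarith) (by positivity)
          hφw_cont hφw_symm hφw_le
    _ = B * (2 / π) ^ (1 + ρ) * Gamma (1 + ρ) / (π * c') * h ^ (1 + ρ) * exp (π / (2 * h)) := by
        rw [hscale, add_comm ρ]; field_simp
end
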